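/- For every d ≥ 1 and every x ∈ R^d with x ∉ Z^d, there is a constant C(x) such that the spherical Dirichlet kernel D_N^d(x) = Σ_{k ∈ Z^d, |k| ≤ N} e^{2πi⟨k,x⟩} satisfies |D_N^d(x)| ≤ C(x) N^{d-1} for all N ≥ 1. -/

import Mathlib

/-!
Pick a coordinate `i₀` with `x i₀ ∉ ℤ` and put `z = e^{2πi x i₀}` and `e = e_{i₀}`. Translating the
ball `B` by `e` multiplies each summand by `z`, so `(z - 1) D_N(x)` is a sum over the symmetric
difference of `B + e` and `B`, whence `|z - 1| |D_N(x)| ≤ 2 #(B \ (B + e))`. A point of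
`B \ (B + e)` is the lowest point of `B` on its line parallel to `e`, so it is determined by its
other `d - 1` coordinates, which leaves at most `(2N + 1)^(d - 1)` such points.
-/

open Real

/-- The spherical Dirichlet kernel `D_N^d(x) = ∑_{k ∈ ℤ^d, |k| ≤ N} e^{2πi⟨k,x⟩}`. -/
noncomputable def sphericalDirichlet (d : ℕ) (N : ℕ) (x : Fin d → ℝ) : ℂ :=
  ∑ k ∈ (Fintype.piFinset fun _ : Fin d => Finset.Icc (-(N : ℤ)) (N : ℤ)).filter
      (fun k => ∑ i, (k i) ^ 2 ≤ (N : ℤ) ^ 2),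
    Complex.exp (2 * (π : ℂ) * Complex.I * (∑ i, (k i : ℝ) * x i))

open Finset

theorem norm_sub_one_mul_norm_sum_le {G 𝕜 : Type*} [AddCommGroup G] [DecidableEq G]
    [NormedField 𝕜] (s : Finset G) (v : G) {f : G → 𝕜} {z : 𝕜}
    (hf : ∀ k, f (k + v) = z * f k) (hf_le : ∀ k, ‖f k‖ ≤ 1) :
    ‖z - 1‖ * ‖∑ k ∈ s, f k‖ ≤ 2 * #(s \ s.map (addRightEmbedding v)) := by
  set t := s.map (addRightEmbedding v)
  have hshift : (z - 1) * ∑ k ∈ s, f k = ∑ k ∈ t \ s, f k - ∑ k ∈ s \ t, f k := by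
    simp [t, sum_sdiff_sub_sum_sdiff, sub_mul, mul_sum, hf]
  have hcard : #(t \ s) = #(s \ t) := card_sdiff_comm (card_map _)
  have hbound (u : Finset G) : ‖∑ k ∈ u, f k‖ ≤ #u :=
    (norm_sum_le_of_le u fun k _ => hf_le k).trans (by simp)
  calc ‖z - 1‖ * ‖∑ k ∈ s, f k‖ = ‖∑ k ∈ t \ s, f k - ∑ k ∈ s \ t, f k‖ := by
        rw [← norm_mul, hshift]
    _ ≤ #(t \ s) + #(s \ t) := (norm_sub_le _ _).trans (add_le_add (hbound _) (hbound _))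
    _ = 2 * #(s \ t) := by rw [hcard]; ring

/-- `{m : ℤ | m ^ 2 ≤ c}` is an interval, so it has at most one left endpoint. -/
theorem Int.eq_of_sq_le_of_lt_sub_one_sq {m n c : ℤ} (hm : m ^ 2 ≤ c) (hm' : c < (m - 1) ^ 2)
    (hn : n ^ 2 ≤ c) (hn' : c < (n - 1) ^ 2) : m = n := by
  nlinarith

section LatticeBall

variable {ι : Type*} [Fintype ι] [DecidableEq ι]

variable (ι) in
noncomputable def latticeBall (N : ℕ) : Finset (ι → ℤ) :=
  (Fintype.piFinset fun _ : ι => Icc (-(N : ℤ)) N).filter fun k => ∑ i, k i ^ 2 ≤ (N : ℤ) ^ 2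

theorem mem_latticeBall {N : ℕ} {k : ι → ℤ} :
    k ∈ latticeBall ι N ↔ ∑ i, k i ^ 2 ≤ (N : ℤ) ^ 2 := by
  refine ⟨fun hk => (mem_filter.mp hk).2, fun hk => mem_filter.mpr ⟨?_, hk⟩⟩
  refine Fintype.mem_piFinset.mpr fun i => mem_Icc.mpr ?_
  exact abs_le_of_sq_le_sq' ((single_le_sum (fun j _ => sq_nonneg (k j)) (mem_univ i)).trans hk)
    (Nat.cast_nonneg N)

theorem card_latticeBall_sdiff_map_single_le (N : ℕ) (i₀ : ι) :
    #(latticeBall ι N \ (latticeBall ι N).map (addRightEmbedding (Pi.single i₀ 1))) ≤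
      (2 * N + 1) ^ (Fintype.card ι - 1) := by
  set B := latticeBall ι N
  let restrict : (ι → ℤ) → ({i // i ≠ i₀} → ℤ) := fun k i => k i
  have hsplit (k : ι → ℤ) : ∑ i, k i ^ 2 = k i₀ ^ 2 + ∑ i, restrict k i ^ 2 :=
    Fintype.sum_eq_add_sum_subtype_ne _ i₀
  have hlowest {k : ι → ℤ} (hk : k ∈ B \ B.map (addRightEmbedding (Pi.single i₀ 1))) :
      k i₀ ^ 2 + ∑ i, restrict k i ^ 2 ≤ (N : ℤ) ^ 2 ∧
        (N : ℤ) ^ 2 < (k i₀ - 1) ^ 2 + ∑ i, restrict k i ^ 2 := by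
    have hB : k ∈ B := (mem_sdiff.mp hk).1
    have hB' : k - Pi.single i₀ 1 ∉ B := fun h => (mem_sdiff.mp hk).2 <|
      mem_map.mpr ⟨_, h, sub_add_cancel k _⟩
    rw [mem_latticeBall, hsplit] at hB hB'
    have hne (i : {i // i ≠ i₀}) : (i : ι) ≠ i₀ := i.2
    exact ⟨hB, not_le.mp (by simpa [restrict, Pi.single_apply, hne] using hB')⟩
  calc _ ≤ #(Fintype.piFinset fun _ : {i // i ≠ i₀} => Icc (-(N : ℤ)) N) := by
        refine card_le_card_of_injOn restrict ?_ ?_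
        · intro k hk
          exact Fintype.mem_piFinset.mpr fun i =>
            Fintype.mem_piFinset.mp (mem_filter.mp (mem_sdiff.mp hk).1).1 i
        · intro k hk k' hk' hkk'
          obtain ⟨hk₁, hk₂⟩ := hlowest hk
          obtain ⟨hk₁', hk₂'⟩ := hlowest hk'
          rw [hkk'] at hk₁ hk₂
          have h₀ : k i₀ = k' i₀ := Int.eq_of_sq_le_of_lt_sub_one_sq
            (le_sub_iff_add_le.mpr hk₁) (sub_lt_iff_lt_add.mpr hk₂)
            (le_sub_iff_add_le.mpr hk₁') (sub_lt_iff_lt_add.mpr hk₂')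
          funext i
          by_cases hi : i = i₀
          · exact hi ▸ h₀
          · exact congrFun hkk' ⟨i, hi⟩
    _ = _ := by
        rw [Fintype.card_piFinset, prod_const, Int.card_Icc, card_univ]
        simp only [sub_neg_eq_add, ne_eq, Fintype.card_subtype_compl, Fintype.card_unique]
        congr 1
        omega

end LatticeBall

namespace Complex

theorem norm_exp_two_pi_I_mul_ofReal (t : ℝ) : ‖exp (2 * π * I * t)‖ = 1 := by
  rw [show 2 * π * I * t = ((2 * π * t : ℝ) : ℂ) * I by push_cast; ring]
  exact norm_exp_ofReal_mul_I _

theorem exp_two_pi_I_mul_ofReal_ne_one {t : ℝ} (ht : ∀ n : ℤ, t ≠ n) :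
    exp (2 * π * I * t) ≠ 1 := by
  rw [Ne, exp_eq_one_iff]
  rintro ⟨n, hn⟩
  refine ht n (ofReal_injective ?_)
  exact mul_left_cancel₀ two_pi_I_ne_zero (by rw [hn]; push_cast; ring)

end Complex

open Complex in
theorem norm_sub_one_mul_norm_sum_latticeBall_le {ι : Type*} [Fintype ι] [DecidableEq ι]
    (x : ι → ℝ) (N : ℕ) (i₀ : ι) :
    ‖exp (2 * π * I * x i₀) - 1‖ *
        ‖∑ k ∈ latticeBall ι N, exp (2 * π * I * (∑ i, (k i : ℝ) * x i))‖ ≤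
      2 * (2 * N + 1) ^ (Fintype.card ι - 1) := by
  have hshift (k : ι → ℤ) : exp (2 * π * I * (∑ i, ((k + Pi.single i₀ 1 : ι → ℤ) i : ℝ) * x i)) =
      exp (2 * π * I * x i₀) * exp (2 * π * I * (∑ i, (k i : ℝ) * x i)) := by
    rw [← Complex.exp_add]
    congr 1
    simp only [Pi.add_apply, Pi.single_apply, Int.cast_add, Int.cast_ite, Int.cast_one,
      Int.cast_zero, add_mul, ite_mul, one_mul, zero_mul, sum_add_distrib, sum_ite_eq', mem_univ,
      ↓reduceIte, ofReal_add, ofReal_sum, ofReal_mul, ofReal_intCast]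
    ring
  refine (norm_sub_one_mul_norm_sum_le _ _ hshift
    fun k => (norm_exp_two_pi_I_mul_ofReal _).le).trans ?_
  exact_mod_cast Nat.mul_le_mul_left 2 (card_latticeBall_sdiff_map_single_le N i₀)

theorem sphericalDirichlet_bound_general (d : ℕ) (x : Fin d → ℝ)
    (hx : ¬ ∀ i, ∃ n : ℤ, x i = n) :
    ∃ C : ℝ, ∀ N : ℕ, 1 ≤ N →
      ‖sphericalDirichlet d N x‖ ≤ C * (N : ℝ) ^ (d - 1) := by
  obtain ⟨i₀, hi₀⟩ := not_forall.mp hx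
  set z := Complex.exp (2 * π * Complex.I * x i₀)
  have hz : 0 < ‖z - 1‖ := norm_pos_iff.mpr <| sub_ne_zero.mpr <|
    Complex.exp_two_pi_I_mul_ofReal_ne_one fun n hn => hi₀ ⟨n, hn⟩
  refine ⟨2 * 3 ^ (d - 1) / ‖z - 1‖, fun N hN => ?_⟩
  have hball := norm_sub_one_mul_norm_sum_latticeBall_le x N i₀
  rw [Fintype.card_fin] at hball
  have hpow : (2 * N + 1 : ℝ) ^ (d - 1) ≤ 3 ^ (d - 1) * N ^ (d - 1) := by
    rw [← mul_pow]
    gcongr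
    linarith [(Nat.one_le_cast (α := ℝ)).mpr hN]
  rw [div_mul_eq_mul_div, le_div_iff₀ hz, mul_comm]
  -- `sphericalDirichlet d N x` is by definition the sum over `latticeBall (Fin d) N`.
  calc ‖z - 1‖ * ‖sphericalDirichlet d N x‖ ≤ 2 * (2 * N + 1) ^ (d - 1) := hball
    _ ≤ 2 * 3 ^ (d - 1) * N ^ (d - 1) := by rw [mul_assoc]; gcongr

/-- **Growth bound for the spherical Dirichlet kernel.** For `d ≥ 1` and
`x ∈ ℝ^d \ ℤ^d`, there is `C(x)` with `|D_N^d(x)| ≤ C(x) N^{d-1}` for all `N ≥ 1`. -/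
theorem sphericalDirichlet_bound (d : ℕ) (hd : 1 ≤ d) (x : Fin d → ℝ)
    (hx : ¬ ∀ i, ∃ n : ℤ, x i = n) :
    ∃ C : ℝ, ∀ N : ℕ, 1 ≤ N →
      ‖sphericalDirichlet d N x‖ ≤ C * (N : ℝ) ^ (d - 1) :=
  sphericalDirichlet_bound_general d x hx
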